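/- arXiv:1602.05019 — 2 statements merged into one kernel-verified Lean document; each statement's English description precedes it below -/
import Mathlib

section
/- For all real x₁ and all real x₂ ≠ 0, the series ∑_{n=1}^∞ (1/(2πn)) e^{-2πn|x₂|} cos(2πn x₁) converges and equals (1/2)|x₂| - log(2)/(2π) - (1/(4π)) log( sinh²(π x₂) + sin²(π x₁) ). -/
open Real

/-!
With `r = e^{-2π|x₂|}` and `θ = 2π x₁`, the series is `1/(2π)` times the real part of
`∑ zⁿ/n = -log (1 - z)` at `z = r e^{iθ}`, i.e. `-(1/2) log |1 - z|²`. Finally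
`|1 - z|² = 1 - 2r cos θ + r² = 4r (sinh² (π x₂) + sin² (π x₁))`, by `cos θ = 1 - 2 sin² (π x₁)`
and `r⁻¹ + r - 2 = (e^{π|x₂|} - e^{-π|x₂|})²`.
-/

lemma Complex.normSq_one_sub_ofReal_mul_exp (r θ : ℝ) :
    Complex.normSq (1 - r * Complex.exp (θ * Complex.I)) = 1 - 2 * r * Real.cos θ + r ^ 2 := by
  rw [Complex.normSq_apply]
  simp only [Complex.sub_re, Complex.one_re, Complex.re_ofReal_mul, Complex.exp_ofReal_mul_I_re,
    Complex.sub_im, Complex.one_im, Complex.im_ofReal_mul, Complex.exp_ofReal_mul_I_im]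
  linear_combination r ^ 2 * Real.sin_sq_add_cos_sq θ

lemma Real.hasSum_pow_mul_cos_div {r : ℝ} (hr : |r| < 1) (θ : ℝ) :
    HasSum (fun n : ℕ => r ^ (n + 1) * cos ((n + 1) * θ) / (n + 1))
      (-log (1 - 2 * r * cos θ + r ^ 2) / 2) := by
  set z : ℂ := r * Complex.exp (θ * Complex.I)
  have hz : ‖z‖ < 1 := by simpa [z, Complex.norm_exp_ofReal_mul_I] using hr
  convert Complex.hasSum_re (Complex.hasSum_taylorSeries_neg_log' hz) using 1
  · funext n
    have : z ^ (n + 1) / (n + 1) =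
        ((r ^ (n + 1) / (n + 1) : ℝ) : ℂ) * Complex.exp (((n + 1) * θ : ℝ) * Complex.I) := by
      rw [mul_pow, ← Complex.exp_nat_mul]
      push_cast
      ring_nf
    rw [this, Complex.re_ofReal_mul, Complex.exp_ofReal_mul_I_re]
    ring
  · rw [Complex.neg_re, Complex.log_re, ← Complex.normSq_one_sub_ofReal_mul_exp,
      ← Complex.sq_norm, Real.log_pow]
    push_cast
    ring

lemma one_sub_two_mul_exp_mul_cos_add_sq (a t : ℝ) :
    1 - 2 * exp (-(2 * a)) * cos (2 * t) + exp (-(2 * a)) ^ 2 =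
      4 * exp (-(2 * a)) * (sinh a ^ 2 + sin t ^ 2) := by
  have hexp : exp (-(2 * a)) = (exp a)⁻¹ ^ 2 := by
    rw [← exp_neg, ← exp_nat_mul]; push_cast; ring_nf
  rw [hexp, cos_two_mul, cos_sq', sinh_eq, exp_neg]
  field_simp
  ring

/-- For all real `x₁` and all real `x₂ ≠ 0`, the series
`∑_{n=1}^∞ (1/(2πn)) e^{-2πn|x₂|} cos(2πn x₁)` converges and equals
`(1/2)|x₂| - log 2/(2π) - (1/(4π)) log(sinh²(π x₂) + sin²(π x₁))`. -/
theorem stmt_0 (x₁ x₂ : ℝ) (hx₂ : x₂ ≠ 0) :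
    HasSum
      (fun n : ℕ =>
        (1 / (2 * π * (n + 1))) * Real.exp (-2 * π * (n + 1) * |x₂|) *
          Real.cos (2 * π * (n + 1) * x₁))
      ((1 / 2) * |x₂| - Real.log 2 / (2 * π) -
        (1 / (4 * π)) * Real.log (Real.sinh (π * x₂) ^ 2 + Real.sin (π * x₁) ^ 2)) := by
  have hπ : 0 < π := pi_pos
  have ha : 0 < π * |x₂| := mul_pos hπ (abs_pos.mpr hx₂)
  set r := exp (-(2 * (π * |x₂|)))
  have hr : |r| < 1 := by
    rw [abs_of_pos (exp_pos _), exp_lt_one_iff]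
    linarith
  have hS : 0 < sinh (π * x₂) ^ 2 + sin (π * x₁) ^ 2 := by
    have : sinh (π * x₂) ≠ 0 := sinh_ne_zero.mpr (by positivity)
    positivity
  have hsinh : sinh (π * |x₂|) ^ 2 = sinh (π * x₂) ^ 2 := by
    rw [← sq_abs (sinh (π * x₂)), abs_sinh, abs_mul, abs_of_pos hπ]
  have hval : 1 / 2 * |x₂| - log 2 / (2 * π) -
        1 / (4 * π) * log (sinh (π * x₂) ^ 2 + sin (π * x₁) ^ 2) =
      1 / (2 * π) * (-log (1 - 2 * r * cos (2 * π * x₁) + r ^ 2) / 2) := by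
    rw [show 2 * π * x₁ = 2 * (π * x₁) by ring, one_sub_two_mul_exp_mul_cos_add_sq, hsinh,
      log_mul (by positivity) hS.ne', log_mul (by norm_num) (exp_pos _).ne', log_exp,
      show (4 : ℝ) = 2 ^ 2 by norm_num, log_pow]
    field_simp
    ring
  rw [hval]
  refine ((hasSum_pow_mul_cos_div hr (2 * π * x₁)).mul_left (1 / (2 * π))).congr_fun fun n => ?_
  rw [← exp_nat_mul]
  push_cast
  field_simp
end

section
/- Define G⁺((x₁,x₂),(y₁,y₂)) = (1/(4π)) [ log( sinh²(π(x₂-y₂)) + sin²(π(x₁-y₁)) ) - log( sinh²(π(x₂+y₂)) + sin²(π(x₁-y₁)) ) ]. Fix y = (y₁,y₂) with y₂ > 0. Then G⁺((x₁,x₂), y) → -y₂ as x₂ → +∞, uniformly in x₁; more precisely there exist constants C, c > 0 (depending on y₂) such that |G⁺((x₁,x₂),y) + y₂| ≤ C e^{-c x₂} for all x₁ ∈ ℝ and all x₂ ≥ y₂ + 1. -/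
/-
Writing `u = e^{-2t}`, one has `sinh² t + s² = (e^{2t} / 4) ((1 - u)² + 4 s² u)`, so
`log (sinh² t + s²) = 2t - log 4 + O(e^{-2t})` uniformly in `s² ≤ 1`. Applied with
`t = π (x₂ ∓ y₂)` and `s = sin (π (x₁ - y₁))`, the two logarithms in `G⁺` differ by
`-4π y₂ + O(e^{-2π (x₂ - y₂)})`.
-/

open Real

lemma abs_log_one_sub_sq_add_le {u v : ℝ} (hu_half : u ≤ 1 / 2) (hv : 0 ≤ v)
    (hvu : v ≤ 4 * u) : |log ((1 - u) ^ 2 + v)| ≤ 4 * u := by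
  have h1u : 0 < 1 - u := by linarith
  have hpos : 0 < (1 - u) ^ 2 + v := by positivity
  rw [abs_le]
  constructor
  · have hlog_sq : 2 * log (1 - u) ≤ log ((1 - u) ^ 2 + v) := by
      rw [← log_rpow h1u]
      exact log_le_log (by positivity) (by norm_num; linarith)
    have hlog_one_sub : 1 - (1 - u)⁻¹ ≤ log (1 - u) := one_sub_inv_le_log_of_pos h1u
    have hinv : (1 - u)⁻¹ ≤ 1 + 2 * u := by
      rw [inv_le_iff_one_le_mul₀ h1u]; nlinarith
    linarith
  · nlinarith [log_le_sub_one_of_pos hpos]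

lemma sinh_sq_add_sq_eq (t s : ℝ) :
    sinh t ^ 2 + s ^ 2 =
      exp (2 * t) / 4 * ((1 - exp (-(2 * t))) ^ 2 + 4 * s ^ 2 * exp (-(2 * t))) := by
  have h2t : exp (2 * t) = exp t ^ 2 := by rw [two_mul, exp_add]; ring
  rw [sinh_eq, exp_neg, exp_neg, h2t]
  field_simp
  ring

lemma abs_log_sinh_sq_add_sq_sub_le {t s : ℝ} (ht : log 2 ≤ 2 * t) (hs : s ^ 2 ≤ 1) :
    |log (sinh t ^ 2 + s ^ 2) - (2 * t - log 4)| ≤ 4 * exp (-(2 * t)) := by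
  set u := exp (-(2 * t))
  have hu_half : u ≤ 1 / 2 := by
    calc u ≤ exp (-log 2) := exp_le_exp.mpr (by linarith)
      _ = 1 / 2 := by rw [exp_neg, exp_log two_pos, one_div]
  have hv : 4 * s ^ 2 * u ≤ 4 * u := by nlinarith [exp_pos (-(2 * t))]
  have hpos : 0 < (1 - u) ^ 2 + 4 * s ^ 2 * u := by nlinarith [exp_pos (-(2 * t))]
  have hlog : log (sinh t ^ 2 + s ^ 2) = 2 * t - log 4 + log ((1 - u) ^ 2 + 4 * s ^ 2 * u) := by
    rw [sinh_sq_add_sq_eq, log_mul (by positivity) hpos.ne', log_div (exp_ne_zero _) four_ne_zero,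
      log_exp]
  rw [hlog, add_sub_cancel_left]
  exact abs_log_one_sub_sq_add_le hu_half (by positivity) hv

lemma abs_log_sinh_sq_add_sq_sub_log_sinh_sq_add_sq_le {a b s : ℝ} (ha : log 2 ≤ 2 * a)
    (hab : a ≤ b) (hs : s ^ 2 ≤ 1) :
    |log (sinh a ^ 2 + s ^ 2) - log (sinh b ^ 2 + s ^ 2) - 2 * (a - b)| ≤
      8 * exp (-(2 * a)) := by
  have hA := abs_log_sinh_sq_add_sq_sub_le ha hs
  have hB := abs_log_sinh_sq_add_sq_sub_le (ha.trans (by linarith) : log 2 ≤ 2 * b) hs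
  have hexp : exp (-(2 * b)) ≤ exp (-(2 * a)) := exp_le_exp.mpr (by linarith)
  calc _ = |(log (sinh a ^ 2 + s ^ 2) - (2 * a - log 4)) -
          (log (sinh b ^ 2 + s ^ 2) - (2 * b - log 4))| := by ring_nf
    _ ≤ _ := (abs_sub _ _).trans (by linarith)

/-- Fix `y = (y₁,y₂)` with `y₂ > 0`.  The 1-d periodic half-space Dirichlet Green
function `G⁺((x₁,x₂), y)` tends to `-y₂` as `x₂ → +∞`, uniformly in `x₁`: there are
constants `C, c > 0` such that `|G⁺((x₁,x₂),y) + y₂| ≤ C e^{-c x₂}` for all `x₁ ∈ ℝ`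
and all `x₂ ≥ y₂ + 1`. -/
theorem stmt_6 (Gp : ℝ × ℝ → ℝ × ℝ → ℝ)
    (hGp : Gp = fun x y => (1 / (4 * π)) *
      (Real.log (Real.sinh (π * (x.2 - y.2)) ^ 2 + Real.sin (π * (x.1 - y.1)) ^ 2) -
       Real.log (Real.sinh (π * (x.2 + y.2)) ^ 2 + Real.sin (π * (x.1 - y.1)) ^ 2)))
    (y₁ y₂ : ℝ) (hy₂ : 0 < y₂) :
    ∃ C c : ℝ, 0 < C ∧ 0 < c ∧
      ∀ x₁ x₂ : ℝ, y₂ + 1 ≤ x₂ →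
        |Gp (x₁, x₂) (y₁, y₂) + y₂| ≤ C * Real.exp (-c * x₂) := by
  subst hGp
  refine ⟨2 / π * exp (2 * π * y₂), 2 * π, by positivity, by positivity, fun x₁ x₂ hx₂ => ?_⟩
  dsimp only
  set s := sin (π * (x₁ - y₁))
  set a := π * (x₂ - y₂) with ha_def
  set b := π * (x₂ + y₂) with hb_def
  have ha : log 2 ≤ 2 * a := by nlinarith [log_two_lt_d9, pi_gt_three]
  have hab : a ≤ b := by nlinarith [pi_pos]
  have hy₂_eq : y₂ = -(2 * (a - b)) / (4 * π) := by
    rw [ha_def, hb_def]; field_simp; ring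
  calc _ = |1 / (4 * π) * (log (sinh a ^ 2 + s ^ 2) - log (sinh b ^ 2 + s ^ 2) - 2 * (a - b))| := by
        rw [hy₂_eq]; ring_nf
    _ ≤ 1 / (4 * π) * (8 * exp (-(2 * a))) := by
        rw [abs_mul, abs_of_pos (by positivity)]
        gcongr
        exact abs_log_sinh_sq_add_sq_sub_log_sinh_sq_add_sq_le ha hab (sin_sq_le_one _)
    _ = _ := by
        rw [ha_def, show -(2 * (π * (x₂ - y₂))) = 2 * π * y₂ + -(2 * π) * x₂ by ring, exp_add]
        field_simp
        ring
end
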